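/- arXiv:1601.06626 — 4 statements merged into one kernel-verified Lean document; each statement's English description precedes it below -/
import Mathlib

section
/- Let K be a field, n a natural number, and I an ideal of K[x_1,...,x_n] such that the quotient K[x_1,...,x_n]/I is a finite-dimensional K-vector space. Let a = (a_1,...,a_n) ∈ K^n be a point of the zero set Zero(I), and let f ∈ K[x_1,...,x_n]. Then the scalar f(a) (the evaluation of f at a) is an eigenvalue of the multiplication operator m_f : K[x_1,...,x_n]/I → K[x_1,...,x_n]/I defined by m_f([g]) = [f·g]. -/
/-! A point `a` of the zero set gives a `K`-algebra character of `K[x]/I`, namely evaluation at `a`,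
and the value of any character at `x` lies in the spectrum of `x`. In finite dimension the spectrum
of an element coincides with that of its multiplication operator, which consists of eigenvalues. -/

theorem Algebra.spectrum_lmul {R A : Type*} [CommSemiring R] [Ring A] [Algebra R A] (x : A) :
    spectrum R (Algebra.lmul R A x) = spectrum R x := by
  ext r
  simp only [spectrum.mem_iff, ← (Algebra.lmul R A).commutes, ← map_sub, Algebra.lmul_isUnit_iff]

theorem Module.End.hasEigenvalue_mulLeft_algHom_apply {K A : Type*} [Field K] [Ring A]
    [Algebra K A] [FiniteDimensional K A] (φ : A →ₐ[K] K) (x : A) :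
    Module.End.HasEigenvalue (LinearMap.mulLeft K x) (φ x) := by
  rw [Module.End.hasEigenvalue_iff_mem_spectrum]
  exact (Algebra.spectrum_lmul (R := K) x).symm ▸ AlgHom.apply_mem_spectrum φ x

theorem eval_is_eigenvalue_of_mulLeft (K : Type*) [Field K] (n : ℕ)
    (I : Ideal (MvPolynomial (Fin n) K))
    [FiniteDimensional K (MvPolynomial (Fin n) K ⧸ I)]
    (a : Fin n → K) (ha : a ∈ MvPolynomial.zeroLocus K I)
    (f : MvPolynomial (Fin n) K) :
    Module.End.HasEigenvalue
      (LinearMap.mulLeft K (Ideal.Quotient.mk I f) :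
        Module.End K (MvPolynomial (Fin n) K ⧸ I))
      (MvPolynomial.eval a f) := by
  let evalAt : (MvPolynomial (Fin n) K ⧸ I) →ₐ[K] K :=
    Ideal.Quotient.liftₐ I (MvPolynomial.aeval a) ha
  exact Module.End.hasEigenvalue_mulLeft_algHom_apply evalAt (Ideal.Quotient.mk I f)
end

section
/- Let K be an algebraically closed field, n a natural number, and I a radical ideal of K[x_1,...,x_n] whose quotient K[x_1,...,x_n]/I is a nonzero finite-dimensional K-vector space. Fix i ∈ {1,...,n} and let m_{x_i} denote the multiplication-by-x_i operator on K[x_1,...,x_n]/I. Then a scalar λ ∈ K is a root of the characteristic polynomial of m_{x_i} if and only if there exists a point a = (a_1,...,a_n) in the zero set Zero(I) with a_i = λ. -/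
/-!
The roots of the characteristic polynomial of `m_f` form the spectrum of `m_f`, which is the
spectrum of `[f]` in `A = K[x]/I`. A point `a ∈ Zero(I)` is a `K`-algebra map `A → K`, and such
maps send every element into its spectrum, so `f(a)` lies in the spectrum of `[f]`. Conversely,
if `[f] - μ` is not a unit it lies in a maximal ideal of `A`, whose preimage in `K[x]` is, by the
Nullstellensatz, the ideal of a point `a`; then `a ∈ Zero(I)` and `f(a) = μ`.
-/

open MvPolynomial

theorem spectrum_mulLeft {R A : Type*} [CommSemiring R] [Ring A] [Algebra R A] (a : A) :
    spectrum R (LinearMap.mulLeft R a) = spectrum R a := by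
  ext r
  change r ∈ spectrum R (Algebra.lmul R A a) ↔ _
  rw [spectrum.mem_iff, spectrum.mem_iff, ← (Algebra.lmul R A).commutes, ← map_sub,
    Algebra.lmul_isUnit_iff]

namespace MvPolynomial

variable {σ K : Type*} [Field K]

theorem mem_spectrum_mk_of_mem_zeroLocus {I : Ideal (MvPolynomial σ K)} {x : σ → K}
    (hx : x ∈ zeroLocus K I) (f : MvPolynomial σ K) :
    eval x f ∈ spectrum K (Ideal.Quotient.mk I f) :=
  AlgHom.apply_mem_spectrum
    (Ideal.Quotient.liftₐ I (aeval x) (mem_zeroLocus_iff.mp hx)) _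

theorem exists_mem_zeroLocus_of_mem_spectrum_mk [IsAlgClosed K] [Finite σ]
    {I : Ideal (MvPolynomial σ K)} {f : MvPolynomial σ K} {μ : K}
    (hμ : μ ∈ spectrum K (Ideal.Quotient.mk I f)) :
    ∃ x ∈ zeroLocus K I, eval x f = μ := by
  rw [spectrum.mem_iff, ← Ideal.Quotient.mk_algebraMap, ← map_sub, algebraMap_eq] at hμ
  obtain ⟨M, hM, hfM⟩ := exists_max_ideal_of_mem_nonunits hμ
  have hMc : (M.comap (Ideal.Quotient.mk I)).IsMaximal :=
    Ideal.comap_isMaximal_of_surjective _ Ideal.Quotient.mk_surjective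
  obtain ⟨x, hx⟩ := eq_vanishingIdeal_singleton_of_isMaximal K hMc
  have hI : I ≤ vanishingIdeal K {x} := fun p hp => by
    rw [← hx, Ideal.mem_comap, Ideal.Quotient.eq_zero_iff_mem.mpr hp]
    exact M.zero_mem
  refine ⟨x, le_zeroLocus_iff_le_vanishingIdeal.mpr hI (Set.mem_singleton x), ?_⟩
  have hfx : C μ - f ∈ vanishingIdeal K {x} := hx ▸ hfM
  rw [mem_vanishingIdeal_singleton_iff, map_sub, aeval_C, Algebra.algebraMap_self,
    RingHom.id_apply, sub_eq_zero] at hfx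
  exact hfx.symm

theorem mem_spectrum_mk_iff [IsAlgClosed K] [Finite σ] (I : Ideal (MvPolynomial σ K))
    (f : MvPolynomial σ K) (μ : K) :
    μ ∈ spectrum K (Ideal.Quotient.mk I f) ↔ ∃ x ∈ zeroLocus K I, eval x f = μ :=
  ⟨exists_mem_zeroLocus_of_mem_spectrum_mk,
    fun ⟨_, hx, hxf⟩ => hxf ▸ mem_spectrum_mk_of_mem_zeroLocus hx f⟩

end MvPolynomial

theorem charpoly_roots_eq_coords_general (K : Type*) [Field K] [IsAlgClosed K] (n : ℕ)
    (I : Ideal (MvPolynomial (Fin n) K))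
    [FiniteDimensional K (MvPolynomial (Fin n) K ⧸ I)]
    (i : Fin n) (lam : K) :
    (LinearMap.charpoly
        (LinearMap.mulLeft K (Ideal.Quotient.mk I (MvPolynomial.X i)) :
          Module.End K (MvPolynomial (Fin n) K ⧸ I))).IsRoot lam ↔
      ∃ a ∈ MvPolynomial.zeroLocus K I, a i = lam := by
  rw [← Module.End.mem_spectrum_iff_isRoot_charpoly, spectrum_mulLeft, mem_spectrum_mk_iff]
  simp only [eval_X]

theorem charpoly_roots_eq_coords (K : Type*) [Field K] [IsAlgClosed K] (n : ℕ)
    (I : Ideal (MvPolynomial (Fin n) K)) (hI : I.IsRadical)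
    [FiniteDimensional K (MvPolynomial (Fin n) K ⧸ I)]
    [Nontrivial (MvPolynomial (Fin n) K ⧸ I)]
    (i : Fin n) (lam : K) :
    (LinearMap.charpoly
        (LinearMap.mulLeft K (Ideal.Quotient.mk I (MvPolynomial.X i)) :
          Module.End K (MvPolynomial (Fin n) K ⧸ I))).IsRoot lam ↔
      ∃ a ∈ MvPolynomial.zeroLocus K I, a i = lam :=
  charpoly_roots_eq_coords_general K n I i lam
end

section
/- Let K be a field, n a natural number, and I an ideal of K[x_1,...,x_n] whose quotient K[x_1,...,x_n]/I is a finite-dimensional K-vector space. If σ ∈ Dec(I), then for every index i ∈ {1,...,n} the characteristic polynomial of the multiplication operator m_{x_{σ(i)}} on K[x_1,...,x_n]/I equals the characteristic polynomial of m_{x_i}. (Consequently a permutation in Dec(I) preserves each block of the partition of {1,...,n} determined by equality of these characteristic polynomials.) -/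
/-!
Renaming the variables by `σ` maps `I` onto itself (`σ⁻¹` is a power of `σ`), so it induces a
`K`-algebra automorphism of `K[x]/I`. This automorphism conjugates multiplication by `xᵢ` into
multiplication by `x_{σ i}`, and conjugate endomorphisms have the same characteristic polynomial.
-/

namespace MvPolynomial

variable {R ι : Type*} [CommSemiring R] {I : Ideal (MvPolynomial ι R)} {σ : Equiv.Perm ι}

theorem rename_perm_pow_mem (hσ : ∀ f ∈ I, rename σ f ∈ I) (k : ℕ) :
    ∀ f ∈ I, rename ⇑(σ ^ k) f ∈ I := by
  induction k with
  | zero => simp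
  | succ k ih =>
    intro f hf
    simpa [rename_rename, pow_succ'] using hσ _ (ih f hf)

theorem rename_perm_inv_mem [Finite ι] (hσ : ∀ f ∈ I, rename σ f ∈ I) :
    ∀ f ∈ I, rename ⇑σ⁻¹ f ∈ I := by
  obtain ⟨k, hk⟩ := mem_powers_iff_mem_zpowers.mpr (Subgroup.inv_mem _ (Subgroup.mem_zpowers σ))
  rw [← hk]
  exact rename_perm_pow_mem hσ k

theorem map_renameEquiv_eq_self [Finite ι] (hσ : ∀ f ∈ I, rename σ f ∈ I) :
    I.map (renameEquiv R σ : MvPolynomial ι R →+* MvPolynomial ι R) = I := by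
  refine le_antisymm (Ideal.map_le_iff_le_comap.mpr hσ) fun f hf ↦ ?_
  have hf' : f = renameEquiv R σ (rename ⇑σ⁻¹ f) := by simp [rename_rename]
  rw [hf']
  exact Ideal.mem_map_of_mem _ (rename_perm_inv_mem hσ f hf)

end MvPolynomial

theorem AlgEquiv.charpoly_mulLeft {R A : Type*} [CommRing R] [Ring A] [Algebra R A]
    [Module.Free R A] [Module.Finite R A] (e : A ≃ₐ[R] A) (a : A) :
    (LinearMap.mulLeft R (e a)).charpoly = (LinearMap.mulLeft R a).charpoly := by
  have hconj : e.toLinearEquiv.conj (LinearMap.mulLeft R a) = LinearMap.mulLeft R (e a) := by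
    ext b
    simp [LinearEquiv.conj_apply]
  rw [← hconj, LinearEquiv.charpoly_conj]

theorem dec_preserves_charpoly (K : Type*) [Field K] (n : ℕ)
    (I : Ideal (MvPolynomial (Fin n) K))
    [FiniteDimensional K (MvPolynomial (Fin n) K ⧸ I)]
    (σ : Equiv.Perm (Fin n))
    (hσ : ∀ f ∈ I, MvPolynomial.rename (σ : Fin n → Fin n) f ∈ I) :
    ∀ i : Fin n,
      LinearMap.charpoly
        (LinearMap.mulLeft K (Ideal.Quotient.mk I (MvPolynomial.X (σ i))) :
          Module.End K (MvPolynomial (Fin n) K ⧸ I)) =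
      LinearMap.charpoly
        (LinearMap.mulLeft K (Ideal.Quotient.mk I (MvPolynomial.X i)) :
          Module.End K (MvPolynomial (Fin n) K ⧸ I)) := by
  intro i
  let e := Ideal.quotientEquivAlg I I (MvPolynomial.renameEquiv K σ)
    (MvPolynomial.map_renameEquiv_eq_self hσ).symm
  have he :
      e (Ideal.Quotient.mk I (MvPolynomial.X i)) = Ideal.Quotient.mk I (MvPolynomial.X (σ i)) := by
    simp [e, Ideal.quotientEquivAlg_mk]
  rw [← he, e.charpoly_mulLeft]
end

section
/- Let K be a field, n a natural number, and I an ideal of K[x_1,...,x_n] whose quotient K[x_1,...,x_n]/I is a finite-dimensional K-vector space. Fix a K-basis of K[x_1,...,x_n]/I and, for each i ∈ {1,...,n}, let M_i be the matrix of the multiplication operator m_{x_i} with respect to this basis. Introduce new variables t_1,...,t_n and form the matrix A = t_1·M_1 + ... + t_n·M_n with entries in the polynomial ring K[t_1,...,t_n], and let F = charpoly(A) be its characteristic polynomial, a polynomial in λ with coefficients in K[t_1,...,t_n]. If σ ∈ Dec(I), then F is invariant under the substitution t_i ↦ t_{σ(i)}; that is, applying the renaming t_i ↦ t_{σ(i)}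 to every coefficient of F yields F again. (This is the inclusion Dec(I) ⊆ Sym(F) proven in Theorem 3.1.) -/
/-!
A permutation `σ` with `ψ_σ(I) ⊆ I` induces a surjective, hence (by finite dimensionality)
bijective, algebra endomorphism `φ` of `K[x]/I`, and multiplicativity of `φ` gives
`φ ∘ m_{x_i} = m_{x_{σ i}} ∘ φ`. In the basis `b` this says `P M_i P⁻¹ = M_{σ i}` for the
invertible matrix `P` of `φ`, so renaming the `t`-variables in `A = ∑ t_i M_i` amounts to
conjugating `A` by a constant invertible matrix, which does not change the characteristic
polynomial.
-/

open MvPolynomial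

namespace Matrix

variable {R V ι : Type*} [CommRing R] [Fintype V]

noncomputable def linearPencil (M : V → Matrix ι ι R) : Matrix ι ι (MvPolynomial V R) :=
  ∑ i, (X i : MvPolynomial V R) • (M i).map C

theorem map_rename_linearPencil (M : V → Matrix ι ι R) (σ : Equiv.Perm V) :
    (linearPencil M).map (rename σ) = linearPencil fun j ↦ M (σ.symm j) := by
  have : (linearPencil M).map (rename σ) =
      ∑ i, (X (σ i) : MvPolynomial V R) • (M i).map C := by
    ext k l
    simp [linearPencil, Matrix.sum_apply]
  rw [this, linearPencil]
  exact Fintype.sum_equiv σ _ _ fun i ↦ by rw [Equiv.symm_apply_apply]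

theorem linearPencil_conj [Fintype ι] (M : V → Matrix ι ι R) (P Q : Matrix ι ι R) :
    linearPencil (fun i ↦ Q * M i * P) =
      Q.map (C : R →+* MvPolynomial V R) * linearPencil M * P.map C := by
  simp only [linearPencil, Finset.mul_sum, Finset.sum_mul, Matrix.map_mul, Matrix.mul_smul,
    Matrix.smul_mul, mul_assoc]

theorem charpoly_conj_of_mul_eq_one {S : Type*} [CommRing S] [Fintype ι] [DecidableEq ι]
    {P Q : Matrix ι ι S} (hPQ : P * Q = 1) (A : Matrix ι ι S) :
    (Q * A * P).charpoly = A.charpoly := by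
  rw [charpoly_mul_comm, ← mul_assoc, hPQ, one_mul]

theorem charpoly_linearPencil_map_rename [Fintype ι] [DecidableEq ι] (M : V → Matrix ι ι R)
    (σ : Equiv.Perm V) {P : Matrix ι ι R} (hP : IsUnit P) (hPM : ∀ i, P * M i = M (σ i) * P) :
    (linearPencil M).charpoly.map ((rename σ : MvPolynomial V R →ₐ[R] MvPolynomial V R) :
      MvPolynomial V R →+* MvPolynomial V R) = (linearPencil M).charpoly := by
  obtain ⟨u, rfl⟩ := hP
  have hM : (fun j ↦ M (σ.symm j)) = fun j ↦ (↑u⁻¹ : Matrix ι ι R) * M j * u := by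
    funext j
    rw [mul_assoc, ← Equiv.apply_symm_apply σ j, ← hPM, Equiv.apply_symm_apply,
      Units.inv_mul_cancel_left]
  have hu : (u : Matrix ι ι R).map (C : R →+* MvPolynomial V R) * (↑u⁻¹ : Matrix ι ι R).map C
      = 1 := by
    rw [← Matrix.map_mul, u.mul_inv, Matrix.map_one _ (map_zero _) (map_one _)]
  rw [← charpoly_map, AlgHom.coe_toRingHom, map_rename_linearPencil, hM, linearPencil_conj,
    charpoly_conj_of_mul_eq_one hu]

end Matrix

theorem AlgHom.toLinearMap_comp_mulLeft {K B : Type*} [CommSemiring K] [Semiring B]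
    [Algebra K B] (φ : B →ₐ[K] B) (x : B) :
    φ.toLinearMap ∘ₗ LinearMap.mulLeft K x = LinearMap.mulLeft K (φ x) ∘ₗ φ.toLinearMap := by
  ext y
  simp

theorem Ideal.bijective_quotientMapₐ_of_surjective {K A : Type*} [Field K] [CommRing A]
    [Algebra K A] {I : Ideal A} [FiniteDimensional K (A ⧸ I)] {f : A →ₐ[K] A}
    (hf : Function.Surjective f) (hI : I ≤ I.comap f) :
    Function.Bijective (Ideal.quotientMapₐ I f hI) := by
  have hsurj : Function.Surjective (Ideal.quotientMapₐ I f hI) :=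
    Ideal.quotientMap_surjective (f := (f : A →+* A)) (H := hI) hf
  exact ⟨LinearMap.injective_iff_surjective (f := (Ideal.quotientMapₐ I f hI).toLinearMap).2
    hsurj, hsurj⟩

theorem dec_subset_sym_of_generic_charpoly (K : Type*) [Field K] (n : ℕ)
    (I : Ideal (MvPolynomial (Fin n) K))
    [FiniteDimensional K (MvPolynomial (Fin n) K ⧸ I)]
    (ι : Type*) [Fintype ι] [DecidableEq ι]
    (b : Module.Basis ι K (MvPolynomial (Fin n) K ⧸ I))
    (M : Fin n → Matrix ι ι K)
    (hM : ∀ i : Fin n, M i = LinearMap.toMatrix b b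
      (LinearMap.mulLeft K (Ideal.Quotient.mk I (MvPolynomial.X i)) :
        Module.End K (MvPolynomial (Fin n) K ⧸ I)))
    (A : Matrix ι ι (MvPolynomial (Fin n) K))
    (hA : A = ∑ i : Fin n, (MvPolynomial.X i : MvPolynomial (Fin n) K) • (M i).map (MvPolynomial.C : K →+* MvPolynomial (Fin n) K))
    (F : Polynomial (MvPolynomial (Fin n) K)) (hF : F = A.charpoly)
    (σ : Equiv.Perm (Fin n))
    (hσ : ∀ f ∈ I, MvPolynomial.rename (σ : Fin n → Fin n) f ∈ I) :
    F.map ((MvPolynomial.rename (σ : Fin n → Fin n) :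
        MvPolynomial (Fin n) K →ₐ[K] MvPolynomial (Fin n) K) :
        MvPolynomial (Fin n) K →+* MvPolynomial (Fin n) K) = F := by
  let φ := Ideal.quotientMapₐ I (rename σ) hσ
  have hP : IsUnit (LinearMap.toMatrix b b φ.toLinearMap) :=
    (LinearMap.isUnit_toMatrix_iff b).2 <| (Module.End.isUnit_iff _).2 <|
      Ideal.bijective_quotientMapₐ_of_surjective (rename_surjective _ σ.surjective) hσ
  have hφX (i : Fin n) : φ (Ideal.Quotient.mk I (X i)) = Ideal.Quotient.mk I (X (σ i)) :=
    congrArg (Ideal.Quotient.mk I) (rename_X σ i)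
  subst hF hA
  refine Matrix.charpoly_linearPencil_map_rename M σ hP fun i ↦ ?_
  rw [hM, hM, ← LinearMap.toMatrix_mul, ← LinearMap.toMatrix_mul, Module.End.mul_eq_comp,
    Module.End.mul_eq_comp, φ.toLinearMap_comp_mulLeft, hφX]
end
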